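/- For 1 ≤ p, q < ∞ and any K > 0, the Mazur map φ_{p,q} : ℓ_p → ℓ_q defined by φ_{p,q}(x) = ‖x‖_p^{1−p/q}·(sign(x_i)|x_i|^{p/q})_i is a positively homogeneous bijection of the closed ball of radius K in ℓ_p onto the closed ball of radius K in ℓ_q, with inverse φ_{q,p}, and it is a uniform homeomorphism between these balls. -/

import Mathlib

/-- The sequence space `ℓ_p`. -/
noncomputable def lpSeq (p : ℝ) (hp : 1 ≤ p) : Type :=
  lp (fun _ : ℕ => ℝ) (ENNReal.ofReal p)

noncomputable instance (p : ℝ) (hp : 1 ≤ p) : NormedAddCommGroup (lpSeq p hp) :=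
  haveI : Fact (1 ≤ ENNReal.ofReal p) :=
    ⟨by simpa [ENNReal.ofReal_one] using ENNReal.ofReal_le_ofReal hp⟩
  inferInstanceAs (NormedAddCommGroup (lp (fun _ : ℕ => ℝ) (ENNReal.ofReal p)))

noncomputable instance (p : ℝ) (hp : 1 ≤ p) : NormedSpace ℝ (lpSeq p hp) :=
  haveI : Fact (1 ≤ ENNReal.ofReal p) :=
    ⟨by simpa [ENNReal.ofReal_one] using ENNReal.ofReal_le_ofReal hp⟩
  inferInstanceAs (NormedSpace ℝ (lp (fun _ : ℕ => ℝ) (ENNReal.ofReal p)))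

/-- Coordinates of an element of `ℓ_p`. -/
def lpSeqCoords (p : ℝ) (hp : 1 ≤ p) (x : lpSeq p hp) : ℕ → ℝ :=
  fun i => (show lp (fun _ : ℕ => ℝ) (ENNReal.ofReal p) from x) i

/-! Write the Mazur map as `x ↦ ‖x‖ ^ (1 - p / q) • S x`, where `S` applies
`t ↦ sign t * |t| ^ (p / q)` coordinatewise, so that `‖S x‖_q = ‖x‖_p ^ (p / q)`. Homogeneity,
norm preservation and `φ_{q,p} ∘ φ_{p,q} = id` then reduce to identities between real powers.

For uniform continuity, `S` is `p / q`-Hölder when `p ≤ q`, and Lipschitz on balls when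
`q < p` (a mean value bound in each coordinate, summed with Hölder's and Minkowski's
inequalities). Away from the origin the factor `‖x‖ ^ (1 - p / q)` is bounded and uniformly
continuous, hence so is `φ`; near the origin `φ` is uniformly small because it preserves norms. -/

open Real Filter Metric Set Topology Uniformity

section RealPow

variable {r a b : ℝ}

lemma forall_of_symm_of_neg {P : ℝ → ℝ → Prop} (symm : ∀ a b, P a b → P b a)
    (neg : ∀ a b, P a b → P (-a) (-b)) (h : ∀ a b, 0 ≤ a → b ≤ a → P a b) (a b : ℝ) :
    P a b := by
  wlog hba : b ≤ a generalizing a b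
  · exact symm _ _ (this b a (le_of_not_ge hba))
  rcases le_total 0 a with ha | ha
  · exact h a b ha hba
  · simpa using neg _ _ (symm _ _ (h (-b) (-a) (by linarith) (by linarith)))

lemma rpow_eq_rpow_sub_one_mul (ha : 0 ≤ a) (hr : r ≠ 0) : a ^ r = a ^ (r - 1) * a := by
  simpa using rpow_add_one' ha (y := r - 1) (by simpa using hr)

lemma rpow_sub_rpow_le_mul (hr : 1 ≤ r) (hb : 0 ≤ b) (hba : b ≤ a) :
    a ^ r - b ^ r ≤ r * a ^ (r - 1) * (a - b) := by
  rcases (hb.trans hba).eq_or_lt with rfl | ha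
  · simp [le_antisymm hba hb, zero_rpow (by linarith : r ≠ 0)]
  have bernoulli := one_add_mul_self_le_rpow_one_add (s := b / a - 1) (by
    have := div_nonneg hb ha.le; linarith) hr
  rw [add_sub_cancel, div_rpow hb ha.le, le_div_iff₀ (rpow_pos_of_pos ha r)] at bernoulli
  rw [rpow_eq_rpow_sub_one_mul ha.le (by positivity)] at bernoulli ⊢
  field_simp at bernoulli
  nlinarith [rpow_pos_of_pos ha (r - 1)]

end RealPow

noncomputable def signedRpow (r a : ℝ) : ℝ := Real.sign a * |a| ^ r

section SignedRpow

variable {r a c : ℝ}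

@[simp]
lemma signedRpow_zero (r : ℝ) : signedRpow r 0 = 0 := by simp [signedRpow]

lemma signedRpow_neg (r a : ℝ) : signedRpow r (-a) = -signedRpow r a := by
  simp [signedRpow, Real.sign_neg]

lemma signedRpow_of_nonneg (hr : r ≠ 0) (ha : 0 ≤ a) : signedRpow r a = a ^ r := by
  rcases ha.eq_or_lt with rfl | ha
  · simp [zero_rpow hr]
  · simp [signedRpow, Real.sign_of_pos ha, abs_of_pos ha]

lemma signedRpow_of_nonpos (hr : r ≠ 0) (ha : a ≤ 0) : signedRpow r a = -(-a) ^ r := by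
  rw [← signedRpow_of_nonneg hr (neg_nonneg.2 ha), signedRpow_neg, neg_neg]

lemma abs_signedRpow (hr : r ≠ 0) (a : ℝ) : |signedRpow r a| = |a| ^ r := by
  rcases lt_trichotomy a 0 with ha | rfl | ha
  · simp [signedRpow, Real.sign_of_neg ha, abs_rpow_of_nonneg (abs_nonneg a)]
  · simp [zero_rpow hr]
  · simp [signedRpow, Real.sign_of_pos ha, abs_rpow_of_nonneg (abs_nonneg a)]

lemma signedRpow_one (a : ℝ) : signedRpow 1 a = a := by
  rcases lt_trichotomy a 0 with ha | rfl | ha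
  · simp [signedRpow, Real.sign_of_neg ha, abs_of_neg ha]
  · simp
  · simp [signedRpow, Real.sign_of_pos ha, abs_of_pos ha]

lemma signedRpow_mul (hr : r ≠ 0) (hc : 0 ≤ c) (a : ℝ) :
    signedRpow r (c * a) = c ^ r * signedRpow r a := by
  rcases hc.eq_or_lt with rfl | hc
  · simp [zero_rpow hr]
  rcases lt_trichotomy a 0 with ha | rfl | ha
  · simp [signedRpow, Real.sign_of_neg ha, Real.sign_of_neg (mul_neg_of_pos_of_neg hc ha),
      abs_mul, abs_of_pos hc, mul_rpow hc.le (abs_nonneg a)]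
  · simp
  · simp [signedRpow, Real.sign_of_pos ha, Real.sign_of_pos (mul_pos hc ha),
      abs_mul, abs_of_pos hc, mul_rpow hc.le (abs_nonneg a)]

lemma signedRpow_signedRpow (r s a : ℝ) :
    signedRpow s (signedRpow r a) = signedRpow (r * s) a := by
  rcases lt_trichotomy a 0 with ha | rfl | ha
  · have : 0 < |a| ^ r := rpow_pos_of_pos (abs_pos.2 ha.ne) r
    simp [signedRpow, Real.sign_of_neg ha, Real.sign_of_neg (neg_neg_of_pos this),
      abs_of_pos this, ← rpow_mul (abs_nonneg a)]
  · simp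
  · have : 0 < |a| ^ r := rpow_pos_of_pos (abs_pos.2 ha.ne') r
    simp [signedRpow, Real.sign_of_pos ha, Real.sign_of_pos this, abs_of_pos this,
      ← rpow_mul (abs_nonneg a)]

lemma abs_signedRpow_sub_le_two_mul_rpow (hr0 : 0 < r) (hr1 : r ≤ 1) (a b : ℝ) :
    |signedRpow r a - signedRpow r b| ≤ 2 * |a - b| ^ r := by
  refine forall_of_symm_of_neg (P := fun a b => |signedRpow r a - signedRpow r b| ≤ 2 * |a - b| ^ r)
    (fun a b h => ?_) (fun a b h => ?_) (fun a b ha hba => ?_) a b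
  · rwa [abs_sub_comm, abs_sub_comm b]
  · rwa [signedRpow_neg, signedRpow_neg, neg_sub_neg, neg_sub_neg, abs_sub_comm, abs_sub_comm b]
  simp only [abs_of_nonneg (sub_nonneg.2 hba)]
  have hab : 0 ≤ (a - b) ^ r := rpow_nonneg (sub_nonneg.2 hba) r
  rcases le_total 0 b with hb | hb
  · have hmono : b ^ r ≤ a ^ r := rpow_le_rpow hb hba hr0.le
    have hsub : a ^ r ≤ (a - b) ^ r + b ^ r := by
      simpa using rpow_add_le_add_rpow (sub_nonneg.2 hba) hb hr0.le hr1
    rw [signedRpow_of_nonneg hr0.ne' ha, signedRpow_of_nonneg hr0.ne' hb,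
      abs_of_nonneg (sub_nonneg.2 hmono)]
    linarith
  · have ha' : a ^ r ≤ (a - b) ^ r := rpow_le_rpow ha (by linarith) hr0.le
    have hb' : (-b) ^ r ≤ (a - b) ^ r := rpow_le_rpow (by linarith) (by linarith) hr0.le
    rw [signedRpow_of_nonneg hr0.ne' ha, signedRpow_of_nonpos hr0.ne' hb, sub_neg_eq_add,
      abs_of_nonneg (add_nonneg (rpow_nonneg ha r) (rpow_nonneg (neg_nonneg.2 hb) r))]
    linarith

lemma abs_signedRpow_sub_le (hr : 1 ≤ r) (a b : ℝ) :
    |signedRpow r a - signedRpow r b| ≤ r * (|a| ^ (r - 1) + |b| ^ (r - 1)) * |a - b| := by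
  refine forall_of_symm_of_neg
    (P := fun a b =>
      |signedRpow r a - signedRpow r b| ≤ r * (|a| ^ (r - 1) + |b| ^ (r - 1)) * |a - b|)
    (fun a b h => ?_) (fun a b h => ?_) (fun a b ha hba => ?_) a b
  · rwa [abs_sub_comm, abs_sub_comm b, add_comm (|b| ^ _)]
  · rwa [signedRpow_neg, signedRpow_neg, neg_sub_neg, neg_sub_neg, abs_sub_comm, abs_sub_comm b,
      abs_neg, abs_neg]
  have hr0 : r ≠ 0 := by positivity
  simp only [abs_of_nonneg (sub_nonneg.2 hba), abs_of_nonneg ha]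
  rcases le_total 0 b with hb | hb
  · have hmono : b ^ r ≤ a ^ r := rpow_le_rpow hb hba (by positivity)
    rw [signedRpow_of_nonneg hr0 ha, signedRpow_of_nonneg hr0 hb,
      abs_of_nonneg (sub_nonneg.2 hmono), abs_of_nonneg hb]
    nlinarith [rpow_sub_rpow_le_mul hr hb hba, rpow_nonneg hb (r - 1),
      mul_nonneg (rpow_nonneg hb (r - 1)) (sub_nonneg.2 hba)]
  · rw [signedRpow_of_nonneg hr0 ha, signedRpow_of_nonpos hr0 hb, sub_neg_eq_add, abs_of_nonpos hb,
      abs_of_nonneg (add_nonneg (rpow_nonneg ha r) (rpow_nonneg (neg_nonneg.2 hb) r)),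
      rpow_eq_rpow_sub_one_mul ha hr0, rpow_eq_rpow_sub_one_mul (neg_nonneg.2 hb) hr0]
    have hA := rpow_nonneg ha (r - 1)
    have hB := rpow_nonneg (neg_nonneg.2 hb) (r - 1)
    nlinarith [mul_le_mul_of_nonneg_left (by linarith : a ≤ a - b) hA,
      mul_le_mul_of_nonneg_left (by linarith : -b ≤ a - b) hB,
      mul_nonneg (mul_nonneg (sub_nonneg.2 hr) (add_nonneg hA hB)) (sub_nonneg.2 hba)]

end SignedRpow

section UniformContinuity

variable {α β 𝕜 E F : Type*}

theorem uniformContinuousOn_of_dist_le_mul_rpow [PseudoMetricSpace α] [PseudoMetricSpace β]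
    {f : α → β} {s : Set α} {C r : ℝ} (hr : 0 < r)
    (h : ∀ x ∈ s, ∀ y ∈ s, dist (f x) (f y) ≤ C * dist x y ^ r) : UniformContinuousOn f s := by
  rw [UniformContinuousOn, tendsto_uniformity_iff_dist_tendsto_zero]
  have hdist : Tendsto (fun z : α × α => dist z.1 z.2) (𝓤 α ⊓ 𝓟 (s ×ˢ s)) (𝓝 0) :=
    tendsto_uniformity_iff_dist_tendsto_zero.1 (tendsto_id.mono_left inf_le_left)
  have hbound : Tendsto (fun t : ℝ => C * t ^ r) (𝓝 0) (𝓝 0) := by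
    simpa [zero_rpow hr.ne'] using
      ((continuousAt_rpow_const 0 r (Or.inr hr.le)).const_mul C).tendsto
  refine squeeze_zero' (Eventually.of_forall fun _ => dist_nonneg) ?_ (hbound.comp hdist)
  filter_upwards [mem_inf_of_right (mem_principal_self _)] with z hz using h _ hz.1 _ hz.2

theorem UniformContinuousOn.smul_of_norm_le [PseudoMetricSpace α] [NormedField 𝕜]
    [SeminormedAddCommGroup E] [NormedSpace 𝕜 E] {f : α → 𝕜} {g : α → E} {s : Set α} {A B : ℝ}
    (hf : UniformContinuousOn f s) (hg : UniformContinuousOn g s)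
    (hfA : ∀ x ∈ s, ‖f x‖ ≤ A) (hgB : ∀ x ∈ s, ‖g x‖ ≤ B) :
    UniformContinuousOn (fun x => f x • g x) s := by
  rw [Metric.uniformContinuousOn_iff_le] at hf hg ⊢
  intro ε hε
  have hη : 0 < ε / (|A| + |B| + 1) := by positivity
  obtain ⟨δ₁, hδ₁, hf⟩ := hf _ hη
  obtain ⟨δ₂, hδ₂, hg⟩ := hg _ hη
  refine ⟨min δ₁ δ₂, lt_min hδ₁ hδ₂, fun x hx y hy hxy => ?_⟩
  have hfxy := hf x hx y hy (hxy.trans (min_le_left _ _))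
  have hgxy := hg x hx y hy (hxy.trans (min_le_right _ _))
  rw [dist_eq_norm] at hfxy hgxy ⊢
  calc ‖f x • g x - f y • g y‖ = ‖f x • (g x - g y) + (f x - f y) • g y‖ := by
        rw [smul_sub, sub_smul, sub_add_sub_cancel]
    _ ≤ ‖f x‖ * ‖g x - g y‖ + ‖f x - f y‖ * ‖g y‖ := by
        grw [norm_add_le, norm_smul, norm_smul]
    _ ≤ |A| * (ε / (|A| + |B| + 1)) + ε / (|A| + |B| + 1) * |B| := by
        gcongr
        · exact (hfA x hx).trans (le_abs_self A)
        · exact (hgB y hy).trans (le_abs_self B)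
    _ = ε * ((|A| + |B|) / (|A| + |B| + 1)) := by ring
    _ ≤ ε := mul_le_of_le_one_right hε.le ((div_le_one (by positivity)).2 (by linarith))

theorem UniformContinuousOn.of_norm_apply_le_of_forall_le_norm [SeminormedAddCommGroup E]
    [SeminormedAddCommGroup F] {f : E → F} {s : Set E} (hf : ∀ x ∈ s, ‖f x‖ ≤ ‖x‖)
    (h : ∀ c > 0, UniformContinuousOn f (s ∩ {x | c ≤ ‖x‖})) : UniformContinuousOn f s := by
  rw [Metric.uniformContinuousOn_iff]
  intro ε hε
  obtain ⟨δ, hδ, hfar⟩ := Metric.uniformContinuousOn_iff.1 (h (ε / 3) (by positivity)) ε hε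
  refine ⟨min δ (ε / 3), by positivity, fun x hx y hy hxy => ?_⟩
  by_cases hxy' : ε / 3 ≤ ‖x‖ ∧ ε / 3 ≤ ‖y‖
  · exact hfar x ⟨hx, hxy'.1⟩ y ⟨hy, hxy'.2⟩ (hxy.trans_le (min_le_left _ _))
  have hclose := abs_le.1 ((abs_norm_sub_norm_le x y).trans (dist_eq_norm x y ▸ hxy.le))
  have hε3 := min_le_right δ (ε / 3)
  calc dist (f x) (f y) ≤ ‖f x‖ + ‖f y‖ := dist_le_norm_add_norm _ _
    _ ≤ ‖x‖ + ‖y‖ := add_le_add (hf x hx) (hf y hy)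
    _ < ε := by
      rw [not_and_or, not_le, not_le] at hxy'
      rcases hxy' with h' | h' <;> linarith

end UniformContinuity

namespace lp

variable {ι : Type*} {p q : ℝ}

lemma summable_abs_rpow (hp : 0 < p) (x : lp (fun _ : ι => ℝ) (.ofReal p)) :
    Summable fun i => |x i| ^ p := by
  simpa [hp.le] using (lp.memℓp x).summable (by simpa [hp.le])

lemma norm_rpow_eq_tsum_abs (hp : 0 < p) (x : lp (fun _ : ι => ℝ) (.ofReal p)) :
    ‖x‖ ^ p = ∑' i, |x i| ^ p := by
  simpa [hp.le] using lp.norm_rpow_eq_tsum (by simpa [hp.le]) x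

lemma norm_eq_tsum_abs_rpow (hp : 0 < p) (x : lp (fun _ : ι => ℝ) (.ofReal p)) :
    ‖x‖ = (∑' i, |x i| ^ p) ^ (1 / p) := by
  simpa [hp.le] using lp.norm_eq_tsum_rpow (by simpa [hp.le]) x

lemma norm_le_mul_norm_rpow_of_abs_le (hp : 0 < p) (hq : 0 < q)
    {x : lp (fun _ : ι => ℝ) (.ofReal p)} {y : lp (fun _ : ι => ℝ) (.ofReal q)} {C : ℝ}
    (hC : 0 ≤ C) (h : ∀ i, |y i| ≤ C * |x i| ^ (p / q)) : ‖y‖ ≤ C * ‖x‖ ^ (p / q) := by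
  have hpow : ∀ t : ℝ, 0 ≤ t → (C * t ^ (p / q)) ^ q = C ^ q * t ^ p := fun t ht => by
    rw [mul_rpow hC (rpow_nonneg ht _), ← rpow_mul ht, div_mul_cancel₀ p hq.ne']
  rw [← rpow_le_rpow_iff (lp.norm_nonneg' _) (by positivity [lp.norm_nonneg' x]) hq,
    hpow _ (lp.norm_nonneg' x), norm_rpow_eq_tsum_abs hp, norm_rpow_eq_tsum_abs hq, ← tsum_mul_left]
  refine (summable_abs_rpow hq y).tsum_le_tsum (fun i => ?_) ((summable_abs_rpow hp x).mul_left _)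
  rw [← hpow _ (abs_nonneg _)]
  exact rpow_le_rpow (abs_nonneg _) (h i) hq.le

lemma norm_le_mul_norm_mul_of_abs_le {s C : ℝ} (htriple : p.HolderTriple s q) (hC : 0 ≤ C)
    {x : lp (fun _ : ι => ℝ) (.ofReal p)} {y : lp (fun _ : ι => ℝ) (.ofReal q)} {g : ι → ℝ}
    (hg : ∀ i, 0 ≤ g i) (hg_sum : Summable fun i => g i ^ s)
    (h : ∀ i, |y i| ≤ C * (|x i| * g i)) : ‖y‖ ≤ C * (‖x‖ * (∑' i, g i ^ s) ^ (1 / s)) := by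
  have hp := htriple.left_pos
  have hq := htriple.pos'
  have hf : ∀ i, 0 ≤ |x i| := fun i => abs_nonneg _
  have hfg_sum := summable_Lr_of_Lp_Lq_of_nonneg htriple hf hg (summable_abs_rpow hp x) hg_sum
  have hfg : ∀ i, 0 ≤ |x i| * g i := fun i => mul_nonneg (hf i) (hg i)
  have hmul : ∀ i, (C * (|x i| * g i)) ^ q = C ^ q * (|x i| * g i) ^ q :=
    fun i => mul_rpow hC (hfg i)
  rw [norm_eq_tsum_abs_rpow hq, norm_eq_tsum_abs_rpow hp x]
  calc (∑' i, |y i| ^ q) ^ (1 / q)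
      ≤ (∑' i, (C * (|x i| * g i)) ^ q) ^ (1 / q) := by
        refine rpow_le_rpow (tsum_nonneg fun i => by positivity) ?_ (by positivity)
        exact (summable_abs_rpow hq y).tsum_le_tsum
          (fun i => rpow_le_rpow (abs_nonneg _) (h i) hq.le)
          (by simpa only [hmul] using hfg_sum.mul_left (C ^ q))
    _ = C * (∑' i, (|x i| * g i) ^ q) ^ (1 / q) := by
        rw [tsum_congr hmul, tsum_mul_left,
          mul_rpow (rpow_nonneg hC q) (tsum_nonneg fun i => rpow_nonneg (hfg i) q),
          ← rpow_mul hC, mul_one_div_cancel hq.ne', rpow_one]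
    _ ≤ C * ((∑' i, |x i| ^ p) ^ (1 / p) * (∑' i, g i ^ s) ^ (1 / s)) := by
        gcongr
        exact Lr_le_Lp_mul_Lq_tsum_of_nonneg htriple hf hg (summable_abs_rpow hp x) hg_sum

lemma summable_and_tsum_abs_rpow_add_le {t s : ℝ} (ht : 0 < t) (hs : 1 ≤ s) (hts : t * s = p)
    (x y : lp (fun _ : ι => ℝ) (.ofReal p)) :
    (Summable fun i => (|x i| ^ t + |y i| ^ t) ^ s) ∧
      (∑' i, (|x i| ^ t + |y i| ^ t) ^ s) ^ (1 / s) ≤ ‖x‖ ^ t + ‖y‖ ^ t := by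
  have hp : 0 < p := hts ▸ by positivity
  have hpow : ∀ z : lp (fun _ : ι => ℝ) (.ofReal p),
      (fun i => (|z i| ^ t) ^ s) = fun i => |z i| ^ p :=
    fun z => funext fun i => by rw [← rpow_mul (abs_nonneg _), hts]
  have hnorm : ∀ z : lp (fun _ : ι => ℝ) (.ofReal p), (∑' i, (|z i| ^ t) ^ s) ^ (1 / s) = ‖z‖ ^ t :=
    fun z => by
      rw [hpow, ← norm_rpow_eq_tsum_abs hp, ← rpow_mul (lp.norm_nonneg' z),
        show p * (1 / s) = t by rw [← hts]; field_simp]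
  have hsum : ∀ z : lp (fun _ : ι => ℝ) (.ofReal p), Summable fun i => (|z i| ^ t) ^ s :=
    fun z => by rw [hpow]; exact summable_abs_rpow hp z
  have := Lp_add_le_tsum_of_nonneg hs (fun i => rpow_nonneg (abs_nonneg (x i)) t)
    (fun i => rpow_nonneg (abs_nonneg (y i)) t) (hsum x) (hsum y)
  rwa [hnorm, hnorm] at this

end lp

section SignedRpowLp

variable {ι : Type*} {p q : ℝ}

lemma abs_signedRpow_div_rpow (hp : 0 < p) (hq : 0 < q) (a : ℝ) :
    |signedRpow (p / q) a| ^ q = |a| ^ p := by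
  rw [abs_signedRpow (by positivity), ← rpow_mul (abs_nonneg a), div_mul_cancel₀ p hq.ne']

lemma memℓp_signedRpow (hp : 0 < p) (hq : 0 < q) (x : lp (fun _ : ι => ℝ) (.ofReal p)) :
    Memℓp (fun i => signedRpow (p / q) (x i)) (.ofReal q) := by
  refine memℓp_gen ?_
  simpa [ENNReal.toReal_ofReal hq.le, abs_signedRpow_div_rpow hp hq] using lp.summable_abs_rpow hp x

noncomputable def signedRpowLp (hp : 0 < p) (hq : 0 < q) (x : lp (fun _ : ι => ℝ) (.ofReal p)) :
    lp (fun _ : ι => ℝ) (.ofReal q) :=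
  ⟨fun i => signedRpow (p / q) (x i), memℓp_signedRpow hp hq x⟩

variable (hp : 0 < p) (hq : 0 < q)
include hp hq

@[simp]
lemma signedRpowLp_apply (x : lp (fun _ : ι => ℝ) (.ofReal p)) (i : ι) :
    signedRpowLp hp hq x i = signedRpow (p / q) (x i) := rfl

@[simp]
lemma signedRpowLp_zero : signedRpowLp hp hq (0 : lp (fun _ : ι => ℝ) (.ofReal p)) = 0 := by
  ext i; simp

lemma norm_signedRpowLp (x : lp (fun _ : ι => ℝ) (.ofReal p)) :
    ‖signedRpowLp hp hq x‖ = ‖x‖ ^ (p / q) := by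
  rw [← rpow_left_inj (lp.norm_nonneg' _) (rpow_nonneg (lp.norm_nonneg' x) _) hq.ne',
    lp.norm_rpow_eq_tsum_abs hq, ← rpow_mul (lp.norm_nonneg' x), div_mul_cancel₀ p hq.ne',
    lp.norm_rpow_eq_tsum_abs hp]
  simp [abs_signedRpow_div_rpow hp hq]

lemma signedRpowLp_smul {c : ℝ} (hc : 0 ≤ c) (x : lp (fun _ : ι => ℝ) (.ofReal p)) :
    signedRpowLp hp hq (c • x) = c ^ (p / q) • signedRpowLp hp hq x := by
  ext i; simp [signedRpow_mul (by positivity : p / q ≠ 0) hc]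

lemma norm_signedRpowLp_sub_le_of_le (hpq : p ≤ q) (x y : lp (fun _ : ι => ℝ) (.ofReal p)) :
    ‖signedRpowLp hp hq x - signedRpowLp hp hq y‖ ≤ 2 * ‖x - y‖ ^ (p / q) :=
  lp.norm_le_mul_norm_rpow_of_abs_le hp hq zero_le_two fun i => by
    simpa using
      abs_signedRpow_sub_le_two_mul_rpow (by positivity) ((div_le_one hq).2 hpq) (x i) (y i)

lemma norm_signedRpowLp_sub_le_of_lt (hq1 : 1 ≤ q) (hqp : q < p)
    (x y : lp (fun _ : ι => ℝ) (.ofReal p)) :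
    ‖signedRpowLp hp hq x - signedRpowLp hp hq y‖ ≤
      p / q * (‖x‖ ^ (p / q - 1) + ‖y‖ ^ (p / q - 1)) * ‖x - y‖ := by
  have hpq : 0 < p - q := sub_pos.2 hqp
  -- `s` is the exponent with `1 / p + 1 / s = 1 / q` and `(p / q - 1) * s = p`
  set s := p * q / (p - q)
  have hs1 : 1 ≤ s := by rw [le_div_iff₀ hpq]; nlinarith
  have htriple : p.HolderTriple s q := ⟨by simp only [s]; field_simp; ring, hp, by positivity⟩
  have ht : 0 < p / q - 1 := by rw [sub_pos, one_lt_div hq]; exact hqp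
  obtain ⟨hg_sum, hg_le⟩ := lp.summable_and_tsum_abs_rpow_add_le ht hs1
    (by simp only [s]; field_simp) x y
  calc ‖signedRpowLp hp hq x - signedRpowLp hp hq y‖
      ≤ p / q * (‖x - y‖ * (∑' i, (|x i| ^ (p / q - 1) + |y i| ^ (p / q - 1)) ^ s) ^ (1 / s)) :=
        lp.norm_le_mul_norm_mul_of_abs_le htriple (by positivity) (fun i => by positivity) hg_sum
          fun i => by
            simpa [mul_comm, mul_left_comm, mul_assoc] using
              abs_signedRpow_sub_le ((one_le_div hq).2 hqp.le) (x i) (y i)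
    _ ≤ p / q * (‖x - y‖ * (‖x‖ ^ (p / q - 1) + ‖y‖ ^ (p / q - 1))) := by
        gcongr
        exact lp.norm_nonneg' _
    _ = p / q * (‖x‖ ^ (p / q - 1) + ‖y‖ ^ (p / q - 1)) * ‖x - y‖ := by ring

lemma signedRpowLp_signedRpowLp (x : lp (fun _ : ι => ℝ) (.ofReal p)) :
    signedRpowLp hq hp (signedRpowLp hp hq x) = x := by
  ext i; simp [signedRpow_signedRpow, div_mul_div_cancel₀ hq.ne', div_self hp.ne', signedRpow_one]

end SignedRpowLp

section MazurMap

variable {ι : Type*} {p q : ℝ}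

noncomputable def mazurMap (hp : 0 < p) (hq : 0 < q) (x : lp (fun _ : ι => ℝ) (.ofReal p)) :
    lp (fun _ : ι => ℝ) (.ofReal q) :=
  ‖x‖ ^ (1 - p / q) • signedRpowLp hp hq x

variable (hp : 0 < p) (hq : 0 < q)
include hp hq

lemma mazurMap_apply (x : lp (fun _ : ι => ℝ) (.ofReal p)) (i : ι) :
    mazurMap hp hq x i = ‖x‖ ^ (1 - p / q) * signedRpow (p / q) (x i) := rfl

@[simp]
lemma mazurMap_zero : mazurMap hp hq (0 : lp (fun _ : ι => ℝ) (.ofReal p)) = 0 := by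
  simp [mazurMap]

lemma norm_mazurMap (x : lp (fun _ : ι => ℝ) (.ofReal p)) : ‖mazurMap hp hq x‖ = ‖x‖ := by
  rw [mazurMap, lp.norm_const_smul (by simpa using hq), norm_signedRpowLp, Real.norm_eq_abs,
    abs_of_nonneg (rpow_nonneg (lp.norm_nonneg' x) _), ← rpow_add' (lp.norm_nonneg' x) (by simp),
    sub_add_cancel, rpow_one]

lemma mazurMap_smul {c : ℝ} (hc : 0 ≤ c) (x : lp (fun _ : ι => ℝ) (.ofReal p)) :
    mazurMap hp hq (c • x) = c • mazurMap hp hq x := by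
  rw [mazurMap, mazurMap, signedRpowLp_smul hp hq hc, lp.norm_const_smul (by simpa using hp),
    Real.norm_eq_abs, abs_of_nonneg hc, mul_rpow hc (lp.norm_nonneg' x), smul_smul, smul_smul,
    mul_right_comm, ← rpow_add' hc (by simp), sub_add_cancel, rpow_one]

lemma mazurMap_mazurMap (x : lp (fun _ : ι => ℝ) (.ofReal p)) :
    mazurMap hq hp (mazurMap hp hq x) = x := by
  rcases eq_or_ne x 0 with rfl | hx
  · simp
  have hx : 0 < ‖x‖ := (lp.norm_nonneg' x).lt_of_ne fun h => hx (lp.norm_eq_zero_iff.1 h.symm)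
  rw [mazurMap, norm_mazurMap, mazurMap, signedRpowLp_smul hq hp (rpow_nonneg hx.le _),
    signedRpowLp_signedRpowLp, smul_smul, ← rpow_mul hx.le, ← rpow_add hx,
    show 1 - q / p + (1 - p / q) * (q / p) = 0 by field_simp; ring, rpow_zero, one_smul]

variable [Fact (1 ≤ ENNReal.ofReal p)] [Fact (1 ≤ ENNReal.ofReal q)]

lemma image_mazurMap_closedBall (K : ℝ) :
    mazurMap (ι := ι) hp hq '' closedBall 0 K = closedBall 0 K := by
  rw [image_eq_preimage_of_inverse (mazurMap_mazurMap hp hq) (mazurMap_mazurMap hq hp)]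
  ext y
  simp [norm_mazurMap]

lemma uniformContinuousOn_signedRpowLp (K : ℝ) :
    UniformContinuousOn (signedRpowLp (ι := ι) hp hq) (closedBall 0 K) := by
  rcases le_or_gt p q with hpq | hqp
  · exact uniformContinuousOn_of_dist_le_mul_rpow (r := p / q) (by positivity) fun x _ y _ => by
      simpa [dist_eq_norm] using norm_signedRpowLp_sub_le_of_le hp hq hpq x y
  have hq1 : 1 ≤ q := ENNReal.one_le_ofReal.1 Fact.out
  have ht : 0 ≤ p / q - 1 := by rw [sub_nonneg, one_le_div hq]; exact hqp.le
  refine uniformContinuousOn_of_dist_le_mul_rpow (C := p / q * (K ^ (p / q - 1) + K ^ (p / q - 1)))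
    one_pos fun x hx y hy => ?_
  rw [mem_closedBall_zero_iff] at hx hy
  rw [rpow_one, dist_eq_norm, dist_eq_norm]
  grw [norm_signedRpowLp_sub_le_of_lt hp hq hq1 hqp x y, hx, hy]

lemma uniformContinuousOn_mazurMap (K : ℝ) :
    UniformContinuousOn (mazurMap (ι := ι) hp hq) (closedBall 0 K) := by
  refine .of_norm_apply_le_of_forall_le_norm (fun x _ => (norm_mazurMap hp hq x).le) fun c hc => ?_
  have hmaps : MapsTo (‖·‖) (closedBall (0 : lp (fun _ : ι => ℝ) (.ofReal p)) K ∩ {x | c ≤ ‖x‖})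
      (Icc c K) := fun x hx => ⟨hx.2, mem_closedBall_zero_iff.1 hx.1⟩
  have hcont : ContinuousOn (fun t : ℝ => t ^ (1 - p / q)) (Icc c K) := fun t ht =>
    (continuousAt_rpow_const t _ (Or.inl (hc.trans_le ht.1).ne')).continuousWithinAt
  obtain ⟨C, hC⟩ := isCompact_Icc.exists_bound_of_continuousOn hcont
  exact UniformContinuousOn.smul_of_norm_le
    ((isCompact_Icc.uniformContinuousOn_of_continuous hcont).comp
      uniformContinuous_norm.uniformContinuousOn hmaps)
    ((uniformContinuousOn_signedRpowLp hp hq K).mono inter_subset_left)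
    (fun x hx => hC _ (hmaps hx))
    (fun x hx => by
      rw [norm_signedRpowLp]
      exact rpow_le_rpow (norm_nonneg _) (mem_closedBall_zero_iff.1 hx.1) (by positivity))

end MazurMap

theorem mazur_map_uniform_homeomorphism_of_balls_general
    (p q : ℝ) (hp : 1 ≤ p) (hq : 1 ≤ q) (K : ℝ) :
    ∃ (φ : lpSeq p hp → lpSeq q hq) (ψ : lpSeq q hq → lpSeq p hp),
      (∀ (x : lpSeq p hp) (i : ℕ),
        lpSeqCoords q hq (φ x) i =
          ‖x‖ ^ (1 - p / q) * (Real.sign (lpSeqCoords p hp x i) *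
            |lpSeqCoords p hp x i| ^ (p / q))) ∧
      (∀ (y : lpSeq q hq) (i : ℕ),
        lpSeqCoords p hp (ψ y) i =
          ‖y‖ ^ (1 - q / p) * (Real.sign (lpSeqCoords q hq y i) *
            |lpSeqCoords q hq y i| ^ (q / p))) ∧
      (∀ (c : ℝ), 0 ≤ c → ∀ x, φ (c • x) = c • φ x) ∧
      (∀ x, ‖φ x‖ = ‖x‖) ∧
      (∀ x, ψ (φ x) = x) ∧ (∀ y, φ (ψ y) = y) ∧
      φ '' Metric.closedBall 0 K = Metric.closedBall 0 K ∧
      UniformContinuousOn φ (Metric.closedBall 0 K) ∧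
      UniformContinuousOn ψ (Metric.closedBall 0 K) := by
  have : Fact (1 ≤ ENNReal.ofReal p) := ⟨ENNReal.one_le_ofReal.2 hp⟩
  have : Fact (1 ≤ ENNReal.ofReal q) := ⟨ENNReal.one_le_ofReal.2 hq⟩
  have hp₀ : 0 < p := zero_lt_one.trans_le hp
  have hq₀ : 0 < q := zero_lt_one.trans_le hq
  exact ⟨mazurMap hp₀ hq₀, mazurMap hq₀ hp₀, mazurMap_apply hp₀ hq₀, mazurMap_apply hq₀ hp₀,
    fun _ hc => mazurMap_smul hp₀ hq₀ hc, norm_mazurMap hp₀ hq₀, mazurMap_mazurMap hp₀ hq₀,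
    mazurMap_mazurMap hq₀ hp₀, image_mazurMap_closedBall hp₀ hq₀ K,
    uniformContinuousOn_mazurMap hp₀ hq₀ K, uniformContinuousOn_mazurMap hq₀ hp₀ K⟩

/-- The Mazur map `φ_{p,q} : ℓ_p → ℓ_q`,
`φ_{p,q}(x) = ‖x‖_p^{1−p/q}·(sign(x_i)|x_i|^{p/q})_i`, is a positively homogeneous,
norm-preserving bijection of the closed `K`-ball of `ℓ_p` onto the closed `K`-ball of
`ℓ_q`, with inverse `φ_{q,p}`, and it is a uniform homeomorphism between these balls. -/
theorem mazur_map_uniform_homeomorphism_of_balls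
    (p q : ℝ) (hp : 1 ≤ p) (hq : 1 ≤ q) (K : ℝ) (hK : 0 < K) :
    ∃ (φ : lpSeq p hp → lpSeq q hq) (ψ : lpSeq q hq → lpSeq p hp),
      (∀ (x : lpSeq p hp) (i : ℕ),
        lpSeqCoords q hq (φ x) i =
          ‖x‖ ^ (1 - p / q) * (Real.sign (lpSeqCoords p hp x i) *
            |lpSeqCoords p hp x i| ^ (p / q))) ∧
      (∀ (y : lpSeq q hq) (i : ℕ),
        lpSeqCoords p hp (ψ y) i =
          ‖y‖ ^ (1 - q / p) * (Real.sign (lpSeqCoords q hq y i) *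
            |lpSeqCoords q hq y i| ^ (q / p))) ∧
      (∀ (c : ℝ), 0 ≤ c → ∀ x, φ (c • x) = c • φ x) ∧
      (∀ x, ‖φ x‖ = ‖x‖) ∧
      (∀ x, ψ (φ x) = x) ∧ (∀ y, φ (ψ y) = y) ∧
      φ '' Metric.closedBall 0 K = Metric.closedBall 0 K ∧
      UniformContinuousOn φ (Metric.closedBall 0 K) ∧
      UniformContinuousOn ψ (Metric.closedBall 0 K) :=
  mazur_map_uniform_homeomorphism_of_balls_general p q hp hq K
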